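/- The function θ ↦ (sin(θ/2)/(θ/2))² is monotone decreasing on (0, π], and hence Re(φ(iθ)) ≥ 4/π² for all θ ∈ [−π, π], where φ(z) = 2(e^z − 1 − z)/z², φ(0) = 1. -/
import Mathlib


noncomputable def φC (z : ℂ) : ℂ :=
  if z = 0 then 1 else 2 * (Complex.exp z - 1 - z) / z ^ 2

open Real

lemma sinc_anti {a b : ℝ} (ha : 0 < a) (hab : a ≤ b) (hb : b ≤ π) :
    Real.sin b / b ≤ Real.sin a / a := by
  have hb0 : 0 < b := ha.trans_le hab
  have hab' : a / b ≤ 1 := (div_le_one hb0).2 hab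
  have h := strictConcaveOn_sin_Icc.concaveOn.2 (x := 0) (y := b)
    ⟨le_rfl, Real.pi_pos.le⟩ ⟨hb0.le, hb⟩
    (show (0:ℝ) ≤ 1 - a / b by linarith) (show (0:ℝ) ≤ a / b by positivity) (by ring)
  simp only [smul_eq_mul, mul_zero, Real.sin_zero, zero_add] at h
  rw [div_mul_cancel₀ _ hb0.ne'] at h
  rw [div_le_div_iff₀ hb0 ha]
  calc Real.sin b * a = (a / b * Real.sin b) * b := by field_simp
    _ ≤ Real.sin a * b := by nlinarith

lemma phi_re {θ : ℝ} (hθ : θ ≠ 0) :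
    (φC (Complex.I * θ)).re = (Real.sin (θ / 2) / (θ / 2)) ^ 2 := by
  have hne : (Complex.I * θ) ≠ 0 := by
    simp [Complex.I_ne_zero, hθ, Complex.ofReal_eq_zero]
  rw [φC, if_neg hne]
  have h2 : (Complex.I * (θ:ℂ)) ^ 2 = ((-(θ^2) : ℝ) : ℂ) := by
    push_cast
    rw [mul_pow, Complex.I_sq]
    ring
  rw [h2, Complex.div_ofReal_re]
  have h3 : (2 * (Complex.exp (Complex.I * θ) - 1 - Complex.I * θ)).re
      = 2 * (Real.cos θ - 1) := by
    rw [mul_comm Complex.I (θ:ℂ)]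
    simp [Complex.exp_ofReal_mul_I_re]
  rw [h3]
  have hs : Real.sin (θ/2) ^ 2 = 1/2 - Real.cos θ / 2 := by
    have := Real.sin_sq_eq_half_sub (θ/2)
    rwa [show 2*(θ/2) = θ by ring] at this
  rw [div_pow, hs]
  field_simp
  ring

theorem re_phi_bound :
    AntitoneOn (fun θ : ℝ => (Real.sin (θ / 2) / (θ / 2)) ^ 2) (Set.Ioc 0 Real.pi) ∧
      ∀ θ ∈ Set.Icc (-Real.pi) Real.pi, 4 / Real.pi ^ 2 ≤ (φC (Complex.I * θ)).re := by
  have hpi := Real.pi_pos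
  have hanti : AntitoneOn (fun θ : ℝ => (Real.sin (θ / 2) / (θ / 2)) ^ 2)
      (Set.Ioc 0 Real.pi) := by
    intro x hx y hy hxy
    have h := sinc_anti (a := x/2) (b := y/2) (by linarith [hx.1]) (by linarith)
      (by linarith [hy.2])
    have hnn : 0 ≤ Real.sin (y/2) / (y/2) :=
      div_nonneg (Real.sin_nonneg_of_nonneg_of_le_pi (by linarith [hy.1])
        (by linarith [hy.2])) (by linarith [hy.1])
    exact pow_le_pow_left₀ hnn h 2
  refine ⟨hanti, ?_⟩
  have hfpi : (Real.sin (π/2) / (π/2)) ^ 2 = 4 / π ^ 2 := by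
    rw [Real.sin_pi_div_two]
    rw [div_pow, one_pow, div_pow]
    rw [one_div_div]
    congr 1
    norm_num
  have key : ∀ t : ℝ, 0 < t → t ≤ π → 4 / π ^ 2 ≤ (Real.sin (t/2) / (t/2)) ^ 2 := by
    intro t ht htp
    have := hanti ⟨ht, htp⟩ ⟨hpi, le_rfl⟩ htp
    simpa only [hfpi] using this
  intro θ hθ
  rcases eq_or_ne θ 0 with rfl | hθ0
  · have : φC (Complex.I * (0:ℝ)) = 1 := by simp [φC]
    rw [this]
    simp only [Complex.one_re]
    rw [div_le_one (by positivity)]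
    nlinarith [Real.pi_gt_three]
  · rw [phi_re hθ0]
    have habs : |θ| ≤ π := abs_le.2 ⟨hθ.1, hθ.2⟩
    have h := key |θ| (abs_pos.2 hθ0) habs
    rcases abs_cases θ with ⟨he, _⟩ | ⟨he, _⟩
    · rwa [he] at h
    · rw [he] at h
      have : Real.sin (-θ/2) / (-θ/2) = Real.sin (θ/2) / (θ/2) := by
        rw [neg_div, Real.sin_neg, neg_div_neg_eq]
      rwa [this] at h
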